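/- arXiv:2105.00147 — 2 statements merged into one kernel-verified Lean document; each statement's English description precedes it below -/
import Mathlib

section
/- Let F be a field, let F[ε] be the ring of dual numbers over F (so ε² = 0), with reduction map π : F[ε] → F sending ε ↦ 0, let G be a group, and let ρ̄ : G → GL₂(F) be a group homomorphism. Suppose η : G → M₂(F) is a map into 2×2 matrices over F satisfying the 1-cocycle condition η(gh) = η(g) + ρ̄(g)·η(h)·ρ̄(g)⁻¹ for all g, h ∈ G. Then for every g ∈ G the matrix (Id + ε·η(g))·ρ̄(g) over F[ε] is invertible, the assignment ρ(g) := (Id + ε·η(g))·ρ̄(g) defines a group homomorphism ρ : G → GL₂(F[ε]), and the entrywise reduction of ρ along π equals ρ̄. If moreover η(g) has trace zero for all g ∈ G, then det ρ(g) equals the image of det ρ̄(g) in F[ε] for all g ∈ G. -/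
open Matrix DualNumber

namespace Stmt7Aux

variable {F : Type*} [Field F] {G : Type*} [Group G]

noncomputable def lift : Matrix (Fin 2) (Fin 2) F →+* Matrix (Fin 2) (Fin 2) (DualNumber F) :=
  RingHom.mapMatrix (algebraMap F (DualNumber F))

lemma lift_apply (X : Matrix (Fin 2) (Fin 2) F) :
    lift X = X.map (algebraMap F (DualNumber F)) := rfl

lemma eps_smul_mul_eps_smul (A B : Matrix (Fin 2) (Fin 2) (DualNumber F)) :
    ((ε : DualNumber F) • A) * ((ε : DualNumber F) • B) = 0 := by
  rw [smul_mul_assoc, mul_smul_comm, smul_smul, DualNumber.eps_mul_eps, zero_smul]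

lemma one_add_mul_one_sub (A : Matrix (Fin 2) (Fin 2) (DualNumber F)) :
    (1 + (ε : DualNumber F) • A) * (1 - (ε : DualNumber F) • A) = 1 := by
  have h := eps_smul_mul_eps_smul A A
  rw [mul_sub, mul_one, add_mul, one_mul, h, add_zero, add_sub_cancel_right]

lemma one_sub_mul_one_add (A : Matrix (Fin 2) (Fin 2) (DualNumber F)) :
    (1 - (ε : DualNumber F) • A) * (1 + (ε : DualNumber F) • A) = 1 := by
  have h := eps_smul_mul_eps_smul A A
  rw [mul_add, mul_one, sub_mul, one_mul, h, sub_zero, sub_add_cancel]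

noncomputable def U (ρbar : G →* GL (Fin 2) F) (η : G → Matrix (Fin 2) (Fin 2) F) (g : G) :
    (Matrix (Fin 2) (Fin 2) (DualNumber F))ˣ where
  val := (1 + (ε : DualNumber F) • lift (η g)) * lift (ρbar g)
  inv := lift (((ρbar g)⁻¹ : GL (Fin 2) F) : Matrix (Fin 2) (Fin 2) F) *
    (1 - (ε : DualNumber F) • lift (η g))
  val_inv := by
    have h1 : lift ((ρbar g : Matrix (Fin 2) (Fin 2) F)) *
        lift (((ρbar g)⁻¹ : GL (Fin 2) F) : Matrix (Fin 2) (Fin 2) F) = 1 := by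
      rw [← _root_.map_mul]
      have : (ρbar g : Matrix (Fin 2) (Fin 2) F) *
          (((ρbar g)⁻¹ : GL (Fin 2) F) : Matrix (Fin 2) (Fin 2) F) = 1 := by
        exact_mod_cast (ρbar g).mul_inv
      rw [this]; exact RingHom.map_one _
    calc (1 + (ε : DualNumber F) • lift (η g)) * lift (ρbar g) *
        (lift (((ρbar g)⁻¹ : GL (Fin 2) F) : Matrix (Fin 2) (Fin 2) F) *
          (1 - (ε : DualNumber F) • lift (η g)))
        = (1 + (ε : DualNumber F) • lift (η g)) *
            (lift (ρbar g) * lift (((ρbar g)⁻¹ : GL (Fin 2) F) : Matrix (Fin 2) (Fin 2) F)) *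
            (1 - (ε : DualNumber F) • lift (η g)) := by noncomm_ring
      _ = 1 := by rw [h1, mul_one, one_add_mul_one_sub]
  inv_val := by
    have h1 : lift (((ρbar g)⁻¹ : GL (Fin 2) F) : Matrix (Fin 2) (Fin 2) F) *
        lift ((ρbar g : Matrix (Fin 2) (Fin 2) F)) = 1 := by
      rw [← _root_.map_mul]
      have : (((ρbar g)⁻¹ : GL (Fin 2) F) : Matrix (Fin 2) (Fin 2) F) *
          (ρbar g : Matrix (Fin 2) (Fin 2) F) = 1 := by
        exact_mod_cast (ρbar g).inv_mul
      rw [this]; exact RingHom.map_one _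
    calc lift (((ρbar g)⁻¹ : GL (Fin 2) F) : Matrix (Fin 2) (Fin 2) F) *
        (1 - (ε : DualNumber F) • lift (η g)) *
        ((1 + (ε : DualNumber F) • lift (η g)) * lift (ρbar g))
        = lift (((ρbar g)⁻¹ : GL (Fin 2) F) : Matrix (Fin 2) (Fin 2) F) *
            ((1 - (ε : DualNumber F) • lift (η g)) * (1 + (ε : DualNumber F) • lift (η g))) *
            lift (ρbar g) := by noncomm_ring
      _ = 1 := by rw [one_sub_mul_one_add, mul_one, h1]


lemma U_mul (ρbar : G →* GL (Fin 2) F) (η : G → Matrix (Fin 2) (Fin 2) F)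
    (hcocycle : ∀ g h : G, η (g * h) =
      η g + (ρbar g : Matrix (Fin 2) (Fin 2) F) * η h *
        ((ρbar g)⁻¹ : GL (Fin 2) F)) (g h : G) :
    U ρbar η (g * h) = U ρbar η g * U ρbar η h := by
  apply Units.ext
  show (1 + (ε : DualNumber F) • lift (η (g * h))) * lift (ρbar (g * h)) =
    (1 + (ε : DualNumber F) • lift (η g)) * lift (ρbar g) *
      ((1 + (ε : DualNumber F) • lift (η h)) * lift (ρbar h))
  set A := lift (η g) with hA
  set B := lift (η h) with hB
  set Lg := lift ((ρbar g : Matrix (Fin 2) (Fin 2) F)) with hLg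
  set Lh := lift ((ρbar h : Matrix (Fin 2) (Fin 2) F)) with hLh
  set Lg' := lift (((ρbar g)⁻¹ : GL (Fin 2) F) : Matrix (Fin 2) (Fin 2) F) with hLg'
  have h1 : Lg' * Lg = 1 := by
    rw [hLg', hLg, ← _root_.map_mul]
    have : (((ρbar g)⁻¹ : GL (Fin 2) F) : Matrix (Fin 2) (Fin 2) F) *
        (ρbar g : Matrix (Fin 2) (Fin 2) F) = 1 := by
      exact_mod_cast (ρbar g).inv_mul
    rw [this]; exact RingHom.map_one _
  have h1' : ∀ X : Matrix (Fin 2) (Fin 2) (DualNumber F), Lg' * (Lg * X) = X := by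
    intro X; rw [← mul_assoc, h1, one_mul]
  have h2 : lift (η (g * h)) = A + Lg * B * Lg' := by
    rw [hcocycle g h, map_add, _root_.map_mul, _root_.map_mul]
  have h3 : lift ((ρbar (g * h) : Matrix (Fin 2) (Fin 2) F)) = Lg * Lh := by
    rw [show (ρbar (g * h) : Matrix (Fin 2) (Fin 2) F) =
      (ρbar g : Matrix (Fin 2) (Fin 2) F) * (ρbar h : Matrix (Fin 2) (Fin 2) F) by
        rw [_root_.map_mul]; rfl, _root_.map_mul]
  rw [h2, h3]
  simp only [add_mul, mul_add, one_mul, mul_one, smul_add, smul_mul_assoc, mul_smul_comm,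
    smul_smul, DualNumber.eps_mul_eps, zero_smul, mul_assoc, h1', add_zero]
  abel


lemma fst_U (ρbar : G →* GL (Fin 2) F) (η : G → Matrix (Fin 2) (Fin 2) F) (g : G)
    (i j : Fin 2) :
    TrivSqZeroExt.fst ((U ρbar η g : Matrix (Fin 2) (Fin 2) (DualNumber F)) i j) =
      (ρbar g : Matrix (Fin 2) (Fin 2) F) i j := by
  set ψ : DualNumber F →+* F := (TrivSqZeroExt.fstHom F F F).toRingHom with hψ
  have key : ((U ρbar η g : Matrix (Fin 2) (Fin 2) (DualNumber F)).map ψ)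
      = (ρbar g : Matrix (Fin 2) (Fin 2) F) := by
    show (((1 + (ε : DualNumber F) • lift (η g)) * lift (ρbar g)).map ψ) = _
    rw [← RingHom.mapMatrix_apply, _root_.map_mul, _root_.map_add, _root_.map_one]
    have h1 : ψ.mapMatrix ((ε : DualNumber F) • lift (η g)) = 0 := by
      ext i j
      simp [hψ, RingHom.mapMatrix_apply, Matrix.map_apply, Matrix.smul_apply, smul_eq_mul,
        TrivSqZeroExt.fst_mul, DualNumber.fst_eps]
    have h2 : ψ.mapMatrix (lift ((ρbar g : Matrix (Fin 2) (Fin 2) F))) =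
        (ρbar g : Matrix (Fin 2) (Fin 2) F) := by
      ext i j
      simp [hψ, RingHom.mapMatrix_apply, Matrix.map_apply, lift_apply]
    rw [h1, h2, add_zero, one_mul]
  calc TrivSqZeroExt.fst ((U ρbar η g : Matrix (Fin 2) (Fin 2) (DualNumber F)) i j)
      = ((U ρbar η g : Matrix (Fin 2) (Fin 2) (DualNumber F)).map ψ) i j := rfl
    _ = (ρbar g : Matrix (Fin 2) (Fin 2) F) i j := by rw [key]

lemma det_U (ρbar : G →* GL (Fin 2) F) (η : G → Matrix (Fin 2) (Fin 2) F) (g : G)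
    (ht : Matrix.trace (η g) = 0) :
    Matrix.det (U ρbar η g : Matrix (Fin 2) (Fin 2) (DualNumber F)) =
      algebraMap F (DualNumber F) (Matrix.det (ρbar g : Matrix (Fin 2) (Fin 2) F)) := by
  show Matrix.det ((1 + (ε : DualNumber F) • lift (η g)) * lift (ρbar g)) = _
  rw [Matrix.det_mul]
  have hLg : Matrix.det (lift ((ρbar g : Matrix (Fin 2) (Fin 2) F))) =
      algebraMap F (DualNumber F) (Matrix.det (ρbar g : Matrix (Fin 2) (Fin 2) F)) :=
    ((algebraMap F (DualNumber F)).map_det _).symm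
  have htr : algebraMap F (DualNumber F) (η g 0 0) + algebraMap F (DualNumber F) (η g 1 1) = 0 := by
    rw [← _root_.map_add, show η g 0 0 + η g 1 1 = 0 by simpa [Matrix.trace_fin_two] using ht,
      map_zero]
  have he : (ε : DualNumber F) * ε = 0 := DualNumber.eps_mul_eps
  have h1 : Matrix.det (1 + (ε : DualNumber F) • lift (η g)) = 1 := by
    rw [Matrix.det_fin_two]
    simp only [Matrix.add_apply, Matrix.smul_apply, Matrix.one_apply, lift_apply,
      Matrix.map_apply, smul_eq_mul]
    norm_num
    linear_combination (ε : DualNumber F) * htr +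
      (algebraMap F (DualNumber F) (η g 0 0) * algebraMap F (DualNumber F) (η g 1 1) -
        algebraMap F (DualNumber F) (η g 0 1) * algebraMap F (DualNumber F) (η g 1 0)) * he
  rw [h1, hLg, one_mul]

end Stmt7Aux

theorem stmt_7 (F : Type*) [Field F] (G : Type*) [Group G]
    (ρbar : G →* GL (Fin 2) F)
    (η : G → Matrix (Fin 2) (Fin 2) F)
    (hcocycle : ∀ g h : G, η (g * h) =
      η g + (ρbar g : Matrix (Fin 2) (Fin 2) F) * η h *
        ((ρbar g)⁻¹ : GL (Fin 2) F)) :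
    (∀ g : G, IsUnit
      ((1 + (DualNumber.eps : DualNumber F) • (η g).map (algebraMap F (DualNumber F))) *
        ((ρbar g : Matrix (Fin 2) (Fin 2) F).map (algebraMap F (DualNumber F))))) ∧
    (∃ ρ : G →* GL (Fin 2) (DualNumber F),
      (∀ g : G, (ρ g : Matrix (Fin 2) (Fin 2) (DualNumber F)) =
        (1 + (DualNumber.eps : DualNumber F) • (η g).map (algebraMap F (DualNumber F))) *
          ((ρbar g : Matrix (Fin 2) (Fin 2) F).map (algebraMap F (DualNumber F)))) ∧
      (∀ g : G, ∀ i j : Fin 2,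
        TrivSqZeroExt.fst ((ρ g : Matrix (Fin 2) (Fin 2) (DualNumber F)) i j) =
          (ρbar g : Matrix (Fin 2) (Fin 2) F) i j) ∧
      ((∀ g : G, Matrix.trace (η g) = 0) →
        ∀ g : G, Matrix.det (ρ g : Matrix (Fin 2) (Fin 2) (DualNumber F)) =
          algebraMap F (DualNumber F)
            (Matrix.det (ρbar g : Matrix (Fin 2) (Fin 2) F)))) := by
  refine ⟨fun g => ⟨Stmt7Aux.U ρbar η g, rfl⟩,
    MonoidHom.mk' (Stmt7Aux.U ρbar η) (Stmt7Aux.U_mul ρbar η hcocycle),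
    fun g => rfl, fun g i j => Stmt7Aux.fst_U ρbar η g i j, fun ht g => Stmt7Aux.det_U ρbar η g (ht g)⟩
end

section
/- Let F be a field, let F[ε] be the ring of dual numbers over F (so ε² = 0), with reduction map π : F[ε] → F sending ε ↦ 0, let G be a group, and let ρ̄ : G → GL₂(F) be a group homomorphism. Suppose ρ : G → GL₂(F[ε]) is a group homomorphism whose entrywise reduction along π equals ρ̄. Then there is a unique map η : G → M₂(F) into 2×2 matrices over F such that ρ(g) = (Id + ε·η(g))·ρ̄(g) for all g ∈ G, and this η satisfies the 1-cocycle condition η(gh) = η(g) + ρ̄(g)·η(h)·ρ̄(g)⁻¹ for all g, h ∈ G. Moreover det ρ(g) equals the image of det ρ̄(g) in F[ε] for all g ∈ G if and only if η(g) has trace zero for all g ∈ G. -/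
open Matrix

set_option maxHeartbeats 1000000 in
theorem stmt_8 (F : Type*) [Field F] (G : Type*) [Group G]
    (ρbar : G →* GL (Fin 2) F)
    (ρ : G →* GL (Fin 2) (DualNumber F))
    (hred : ∀ g : G, ∀ i j : Fin 2,
      TrivSqZeroExt.fst ((ρ g : Matrix (Fin 2) (Fin 2) (DualNumber F)) i j) =
        (ρbar g : Matrix (Fin 2) (Fin 2) F) i j) :
    ∃ η : G → Matrix (Fin 2) (Fin 2) F,
      (∀ g : G, (ρ g : Matrix (Fin 2) (Fin 2) (DualNumber F)) =
        (1 + (DualNumber.eps : DualNumber F) • (η g).map (algebraMap F (DualNumber F))) *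
          ((ρbar g : Matrix (Fin 2) (Fin 2) F).map (algebraMap F (DualNumber F)))) ∧
      (∀ η' : G → Matrix (Fin 2) (Fin 2) F,
        (∀ g : G, (ρ g : Matrix (Fin 2) (Fin 2) (DualNumber F)) =
          (1 + (DualNumber.eps : DualNumber F) • (η' g).map (algebraMap F (DualNumber F))) *
            ((ρbar g : Matrix (Fin 2) (Fin 2) F).map (algebraMap F (DualNumber F)))) →
        η' = η) ∧
      (∀ g h : G, η (g * h) =
        η g + (ρbar g : Matrix (Fin 2) (Fin 2) F) * η h *
          ((ρbar g)⁻¹ : GL (Fin 2) F)) ∧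
      ((∀ g : G, Matrix.det (ρ g : Matrix (Fin 2) (Fin 2) (DualNumber F)) =
          algebraMap F (DualNumber F)
            (Matrix.det (ρbar g : Matrix (Fin 2) (Fin 2) F))) ↔
        (∀ g : G, Matrix.trace (η g) = 0)) := by
  classical
  set σ : F →+* DualNumber F := algebraMap F (DualNumber F) with hσ
  set B : G → Matrix (Fin 2) (Fin 2) F :=
    fun g => (ρ g : Matrix (Fin 2) (Fin 2) (DualNumber F)).map TrivSqZeroExt.snd with hB
  set η : G → Matrix (Fin 2) (Fin 2) F :=
    fun g => B g * (((ρbar g)⁻¹ : GL (Fin 2) F) : Matrix (Fin 2) (Fin 2) F) with hη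
  have hinl : ∀ a : F, σ a = TrivSqZeroExt.inl a := fun _ => rfl
  -- decomposition
  have hdecomp : ∀ g : G, (ρ g : Matrix (Fin 2) (Fin 2) (DualNumber F)) =
      (ρbar g : Matrix (Fin 2) (Fin 2) F).map σ +
        (DualNumber.eps : DualNumber F) • (B g).map σ := by
    intro g
    refine Matrix.ext fun i j => ?_
    rw [Matrix.add_apply, Matrix.smul_apply, Matrix.map_apply, Matrix.map_apply, hinl, hinl,
      smul_eq_mul]
    refine TrivSqZeroExt.ext ?_ ?_
    · simp [hred g i j]
    · simp [hB]
  -- injectivity of eps • map σ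
  have hinj : ∀ X Y : Matrix (Fin 2) (Fin 2) F,
      (DualNumber.eps : DualNumber F) • X.map σ = (DualNumber.eps : DualNumber F) • Y.map σ →
        X = Y := by
    intro X Y h
    refine Matrix.ext fun i j => ?_
    have h1 := congrFun (congrFun h i) j
    rw [Matrix.smul_apply, Matrix.smul_apply, Matrix.map_apply, Matrix.map_apply, hinl, hinl,
      smul_eq_mul, smul_eq_mul] at h1
    have h2 := congrArg TrivSqZeroExt.snd h1
    simpa using h2
  have hval : ∀ g : G, η g * (ρbar g : Matrix (Fin 2) (Fin 2) F) = B g := by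
    intro g
    rw [hη]
    dsimp only
    rw [Matrix.mul_assoc, Units.inv_mul, Matrix.mul_one]
  have hmain : ∀ g : G, (ρ g : Matrix (Fin 2) (Fin 2) (DualNumber F)) =
      (1 + (DualNumber.eps : DualNumber F) • (η g).map σ) *
        ((ρbar g : Matrix (Fin 2) (Fin 2) F).map σ) := by
    intro g
    rw [add_mul, one_mul, smul_mul_assoc, ← Matrix.map_mul, hval g, hdecomp g]
  refine ⟨η, hmain, ?_, ?_, ?_⟩
  · -- uniqueness
    intro η' h'
    funext g
    have e := (h' g).symm.trans (hmain g)
    rw [add_mul, add_mul, one_mul, smul_mul_assoc, smul_mul_assoc,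
      ← Matrix.map_mul, ← Matrix.map_mul] at e
    have e2 := hinj _ _ (add_left_cancel e)
    have e3 := congrArg (· * (((ρbar g)⁻¹ : GL (Fin 2) F) : Matrix (Fin 2) (Fin 2) F)) e2
    simpa only [Matrix.mul_assoc, Units.mul_inv, Matrix.mul_one] using e3
  · -- cocycle
    intro g h
    have hBmul : B (g * h) = (ρbar g : Matrix (Fin 2) (Fin 2) F) * B h +
        B g * (ρbar h : Matrix (Fin 2) (Fin 2) F) := by
      apply hinj
      have hρ : (ρ (g * h) : Matrix (Fin 2) (Fin 2) (DualNumber F)) =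
          (ρ g : Matrix (Fin 2) (Fin 2) (DualNumber F)) * (ρ h) := by
        rw [← Units.val_mul, ← _root_.map_mul]
      have hρbar : ((ρbar (g * h) : Matrix (Fin 2) (Fin 2) F)).map σ =
          ((ρbar g : Matrix (Fin 2) (Fin 2) F)).map σ *
            ((ρbar h : Matrix (Fin 2) (Fin 2) F)).map σ := by
        rw [← Matrix.map_mul, ← Units.val_mul, ← _root_.map_mul]
      have e := hρ
      rw [hdecomp (g * h), hdecomp g, hdecomp h, hρbar] at e
      rw [add_mul, mul_add, mul_add, smul_mul_assoc, smul_mul_assoc, mul_smul_comm,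
        mul_smul_comm, smul_smul, DualNumber.eps_mul_eps, zero_smul, add_zero,
        add_assoc] at e
      have e2 := add_left_cancel e
      rw [Matrix.map_add _ (fun a b => map_add σ a b), Matrix.map_mul, Matrix.map_mul,
        smul_add]
      rw [e2, ← Matrix.map_mul, ← Matrix.map_mul, Matrix.map_mul, Matrix.map_mul]
    rw [hη]
    dsimp only
    rw [hBmul]
    have hinv : (((ρbar (g * h))⁻¹ : GL (Fin 2) F) : Matrix (Fin 2) (Fin 2) F) =
        (((ρbar h)⁻¹ : GL (Fin 2) F) : Matrix (Fin 2) (Fin 2) F) *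
          (((ρbar g)⁻¹ : GL (Fin 2) F) : Matrix (Fin 2) (Fin 2) F) := by
      rw [← Units.val_mul, ← _root_.mul_inv_rev, ← _root_.map_mul]
    rw [hinv, add_mul, add_comm]
    congr 1
    · rw [Matrix.mul_assoc, Units.mul_inv_cancel_left]
    · simp only [Matrix.mul_assoc]
  · -- det
    have hdet : ∀ g : G, Matrix.det (ρ g : Matrix (Fin 2) (Fin 2) (DualNumber F)) =
        TrivSqZeroExt.inl ((ρbar g : Matrix (Fin 2) (Fin 2) F).det) +
          DualNumber.eps * TrivSqZeroExt.inl
            (Matrix.trace (η g) * (ρbar g : Matrix (Fin 2) (Fin 2) F).det) := by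
      intro g
      rw [hmain g, Matrix.det_mul]
      have hcast : ((ρbar g : Matrix (Fin 2) (Fin 2) F).map σ).det =
          σ ((ρbar g : Matrix (Fin 2) (Fin 2) F).det) := by
        rw [RingHom.map_det, RingHom.mapMatrix_apply]
      rw [hcast, hinl]
      refine TrivSqZeroExt.ext ?_ ?_
      · simp [Matrix.det_fin_two, Matrix.one_apply, Matrix.trace_fin_two, hinl, smul_eq_mul]
      · simp [Matrix.det_fin_two, Matrix.one_apply, Matrix.trace_fin_two, hinl, smul_eq_mul]
        ring
    constructor
    · intro hdq g
      have hd : IsUnit ((ρbar g : Matrix (Fin 2) (Fin 2) F).det) :=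
        (Matrix.isUnit_iff_isUnit_det _).mp (ρbar g).isUnit
      have e := (hdq g).symm.trans (hdet g)
      rw [hinl, left_eq_add] at e
      have e2 := congrArg TrivSqZeroExt.snd e
      simp at e2
      rcases e2 with h1 | h2
      · exact h1
      · exact absurd h2 hd.ne_zero
    · intro ht g
      rw [hdet g, ht g, zero_mul, hinl]
      simp
end
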